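/- arXiv:1406.5665 — 2 statements merged into one kernel-verified Lean document; each statement's English description precedes it below -/
import Mathlib

section
/- Let c : V → [0,1] be vertex weights on a finite set, T ⊆ V with |T| = n′, and let k ≤ n′/12 be a positive integer. Let S be a uniformly random subset of T of size k. Then with probability at least 1 − 1/n (where n ≥ |V|), for every vertex x of a graph H on V, ∑_{y ∈ N(x) ∩ S} c_y ≤ (4k/n′)·∑_{y ∈ N(x)∖S} c_y + 2·log n. -/
/-!
A vertex `x` can fail only if `X = ∑_{N(x) ∩ S} c` exceeds `3pW + (3/2) log n`, where
`p = k/n'` and `W = ∑_{N(x) ∩ T} c`: indeed `∑_{N(x) \ S} c ≥ W - X` and `4p ≤ 1/3`.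
Hoeffding's comparison of sampling without and with replacement enters through the count
that a fixed `r`-subset of `T` lies in at most a `(k/n')^r` fraction of the `k`-subsets of `T`;
expanding `e^{λX} = ∏_{y ∈ S} (1 + (e^{λ c_y} - 1))` over subsets then gives
`E e^{λX} ≤ ∏_{y ∈ T} (1 + p (e^{λ c_y} - 1)) ≤ exp (p (e^λ - 1) W)`.
For `λ = 3/2`, since `e^{3/2} < 11/2`, Markov's inequality bounds the failure probability of
each vertex by `n^{-9/4}`, and a union bound over the at most `n` vertices leaves `1/n`.
-/

open Finset Real

theorem Nat.descFactorial_mul_pow_le {k n : ℕ} (h : k ≤ n) (r : ℕ) :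
    k.descFactorial r * n ^ r ≤ n.descFactorial r * k ^ r := by
  induction r with
  | zero => simp
  | succ r ih =>
    have hstep : (k - r) * n ≤ (n - r) * k := by
      rw [Nat.sub_mul, Nat.sub_mul, mul_comm n k]
      exact Nat.sub_le_sub_left (Nat.mul_le_mul_left r h) _
    calc k.descFactorial (r + 1) * n ^ (r + 1)
        = ((k - r) * n) * (k.descFactorial r * n ^ r) := by
          rw [Nat.descFactorial_succ, pow_succ]; ring
      _ ≤ ((n - r) * k) * (n.descFactorial r * k ^ r) := Nat.mul_le_mul hstep ih
      _ = n.descFactorial (r + 1) * k ^ (r + 1) := by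
          rw [Nat.descFactorial_succ, pow_succ]; ring

theorem Nat.choose_sub_mul_pow_le {r k n : ℕ} (hrk : r ≤ k) (hkn : k ≤ n) :
    (n - r).choose (k - r) * n ^ r ≤ n.choose k * k ^ r := by
  have hpos : 0 < n.descFactorial r := Nat.descFactorial_pos.2 (hrk.trans hkn)
  have hchoose : n.descFactorial r * (n - r).choose (k - r) = n.choose k * k.descFactorial r := by
    rw [Nat.descFactorial_eq_factorial_mul_choose, Nat.descFactorial_eq_factorial_mul_choose,
      mul_assoc, ← Nat.choose_mul hrk]
    ring
  refine Nat.le_of_mul_le_mul_left ?_ hpos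
  calc n.descFactorial r * ((n - r).choose (k - r) * n ^ r)
      = n.choose k * (k.descFactorial r * n ^ r) := by rw [← mul_assoc, hchoose, mul_assoc]
    _ ≤ n.choose k * (n.descFactorial r * k ^ r) :=
        Nat.mul_le_mul_left _ (Nat.descFactorial_mul_pow_le hkn r)
    _ = n.descFactorial r * (n.choose k * k ^ r) := by ring

theorem Finset.card_filter_powersetCard_subset_le {α : Type*} [DecidableEq α]
    {R T : Finset α} (hR : R ⊆ T) (k : ℕ) :
    (#{S ∈ T.powersetCard k | R ⊆ S} : ℝ) ≤ #(T.powersetCard k) * ((k : ℝ) / #T) ^ #R := by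
  by_cases hRk : #R ≤ k ∧ k ≤ #T
  · obtain ⟨hRk, hkT⟩ := hRk
    have hpos : (0 : ℝ) < (#T : ℝ) ^ #R := by
      rcases (#R).eq_zero_or_pos with h | h
      · simp [h]
      · exact pow_pos (by exact_mod_cast h.trans_le (card_le_card hR)) _
    rw [card_filter_powersetCard_subset R T k hR hRk, card_powersetCard, div_pow,
      mul_div_assoc', le_div_iff₀ hpos]
    exact_mod_cast Nat.choose_sub_mul_pow_le hRk hkT
  · have hempty : {S ∈ T.powersetCard k | R ⊆ S} = ∅ := by
      refine filter_false_of_mem fun S hS hRS => hRk ?_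
      rw [mem_powersetCard] at hS
      exact ⟨hS.2 ▸ card_le_card hRS, hS.2 ▸ card_le_card hS.1⟩
    rw [hempty, card_empty, Nat.cast_zero]
    positivity

theorem Finset.sum_powersetCard_prod_one_add_le {α : Type*} [DecidableEq α]
    (T : Finset α) (k : ℕ) {g : α → ℝ} (hg : ∀ y ∈ T, 0 ≤ g y) :
    ∑ S ∈ T.powersetCard k, ∏ y ∈ S, (1 + g y) ≤
      #(T.powersetCard k) * ∏ y ∈ T, (1 + (k : ℝ) / #T * g y) := by
  have hswap : ∑ S ∈ T.powersetCard k, ∑ R ∈ S.powerset, ∏ y ∈ R, g y =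
      ∑ R ∈ T.powerset, ∑ _S ∈ {S ∈ T.powersetCard k | R ⊆ S}, ∏ y ∈ R, g y := by
    refine sum_comm' fun S R => ?_
    simp only [mem_powerset, mem_filter, mem_powersetCard]
    exact ⟨fun h => ⟨h, h.2.trans h.1.1⟩, fun h => h.1⟩
  simp only [prod_one_add, hswap, mul_sum, sum_const, nsmul_eq_mul]
  refine sum_le_sum fun R hR => ?_
  rw [mem_powerset] at hR
  rw [prod_mul_distrib, prod_const, ← mul_assoc]
  exact mul_le_mul_of_nonneg_right (card_filter_powersetCard_subset_le hR k)
    (prod_nonneg fun y hy => hg y (hR hy))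

theorem Real.exp_mul_le_one_add_mul {t : ℝ} (ht0 : 0 ≤ t) (ht1 : t ≤ 1) (l : ℝ) :
    exp (l * t) ≤ 1 + t * (exp l - 1) := by
  have h := convexOn_exp.2 (Set.mem_univ 0) (Set.mem_univ l) (sub_nonneg.2 ht1) ht0
    (sub_add_cancel 1 t)
  simp only [smul_eq_mul, mul_zero, zero_add, exp_zero, mul_one] at h
  rw [mul_comm]
  linarith

theorem Real.exp_three_halves_lt : exp (3 / 2) < 11 / 2 := by
  have hsq : exp (3 / 2) ^ 2 = exp 1 ^ 3 := by
    rw [← exp_nat_mul, ← exp_nat_mul]; norm_num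
  have hcube : exp 1 ^ 3 < 3 ^ 3 := pow_lt_pow_left₀ exp_one_lt_three (exp_pos 1).le (by norm_num)
  exact lt_of_pow_lt_pow_left₀ 2 (by norm_num) (by rw [hsq]; linarith)

theorem Finset.card_filter_lt_le_exp_mul_sum {ι : Type*} (s : Finset ι) (f : ι → ℝ)
    {l : ℝ} (hl : 0 ≤ l) (m : ℝ) :
    (#{a ∈ s | m < f a} : ℝ) ≤ exp (-(l * m)) * ∑ a ∈ s, exp (l * f a) := by
  rw [mul_sum, card_eq_sum_ones, Nat.cast_sum, Nat.cast_one]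
  calc ∑ a ∈ s with m < f a, (1 : ℝ)
      ≤ ∑ a ∈ s with m < f a, exp (-(l * m)) * exp (l * f a) := by
        refine sum_le_sum fun a ha => ?_
        rw [← exp_add, one_le_exp_iff]
        nlinarith [(mem_filter.1 ha).2]
    _ ≤ ∑ a ∈ s, exp (-(l * m)) * exp (l * f a) :=
        sum_le_sum_of_subset_of_nonneg (filter_subset _ _) fun a _ _ => by positivity

theorem Finset.sum_powersetCard_exp_sum_le {α : Type*} [DecidableEq α]
    (T : Finset α) (k : ℕ) {c : α → ℝ} (hc : ∀ y, c y ∈ Set.Icc (0 : ℝ) 1) {l : ℝ} (hl : 0 ≤ l) :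
    ∑ S ∈ T.powersetCard k, exp (l * ∑ y ∈ S, c y) ≤
      #(T.powersetCard k) * exp ((k : ℝ) / #T * (exp l - 1) * ∑ y ∈ T, c y) := by
  have hg : ∀ y, 0 ≤ exp (l * c y) - 1 :=
    fun y => sub_nonneg.2 (one_le_exp (mul_nonneg hl (hc y).1))
  have hexp : ∀ S : Finset α, exp (l * ∑ y ∈ S, c y) = ∏ y ∈ S, (1 + (exp (l * c y) - 1)) := by
    intro S
    simp only [mul_sum, exp_sum, add_sub_cancel]
  simp only [hexp]
  refine (sum_powersetCard_prod_one_add_le T k fun y _ => hg y).trans ?_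
  refine mul_le_mul_of_nonneg_left ?_ (Nat.cast_nonneg _)
  refine (prod_one_add_le_exp_sum T fun y => mul_nonneg (by positivity) (hg y)).trans ?_
  rw [exp_le_exp, mul_sum]
  refine sum_le_sum fun y _ => ?_
  rw [mul_assoc]
  refine mul_le_mul_of_nonneg_left ?_ (by positivity)
  linarith [exp_mul_le_one_add_mul (hc y).1 (hc y).2 l]

theorem Finset.card_filter_powersetCard_lt_sum_le {α : Type*} [DecidableEq α]
    (T : Finset α) (k : ℕ) {c : α → ℝ} (hc : ∀ y, c y ∈ Set.Icc (0 : ℝ) 1) {l : ℝ} (hl : 0 ≤ l)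
    (m : ℝ) :
    (#{S ∈ T.powersetCard k | m < ∑ y ∈ S, c y} : ℝ) ≤
      #(T.powersetCard k) * exp (-(l * m) + (k : ℝ) / #T * (exp l - 1) * ∑ y ∈ T, c y) := by
  calc (#{S ∈ T.powersetCard k | m < ∑ y ∈ S, c y} : ℝ)
      ≤ exp (-(l * m)) * ∑ S ∈ T.powersetCard k, exp (l * ∑ y ∈ S, c y) :=
        card_filter_lt_le_exp_mul_sum _ _ hl m
    _ ≤ exp (-(l * m)) *
        (#(T.powersetCard k) * exp ((k : ℝ) / #T * (exp l - 1) * ∑ y ∈ T, c y)) :=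
        mul_le_mul_of_nonneg_left (sum_powersetCard_exp_sum_le T k hc hl) (exp_pos _).le
    _ = _ := by rw [exp_add]; ring

theorem Finset.lt_sum_inter_of_mul_sum_sdiff_lt {α : Type*} [DecidableEq α]
    {A S T : Finset α} {c : α → ℝ} (hc : ∀ y, 0 ≤ c y) {p t : ℝ} (hp0 : 0 ≤ p)
    (hp : p ≤ 1 / 12) (ht : 0 ≤ t)
    (h : 4 * p * ∑ y ∈ A \ S, c y + 2 * t < ∑ y ∈ A ∩ S, c y) :
    3 * p * ∑ y ∈ T ∩ A, c y + 3 / 2 * t < ∑ y ∈ A ∩ S, c y := by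
  have hsplit : ∑ y ∈ T ∩ A, c y ≤ ∑ y ∈ A ∩ S, c y + ∑ y ∈ A \ S, c y := by
    rw [sum_inter_add_sum_sdiff]
    exact sum_le_sum_of_subset_of_nonneg inter_subset_right fun y _ _ => hc y
  have hW : 0 ≤ ∑ y ∈ T ∩ A, c y := sum_nonneg fun y _ => hc y
  have hX : 0 ≤ ∑ y ∈ A ∩ S, c y := sum_nonneg fun y _ => hc y
  nlinarith [mul_le_mul_of_nonneg_left hsplit hp0, mul_nonneg hp0 hW, mul_nonneg hp0 hX,
    mul_nonneg (sub_nonneg.2 hp) hW, mul_nonneg (sub_nonneg.2 hp) ht]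

theorem Finset.card_filter_powersetCard_not_le_le {α : Type*} [DecidableEq α]
    (A T : Finset α) {k : ℕ} (hk : (k : ℝ) ≤ #T / 12) {c : α → ℝ}
    (hc : ∀ y, c y ∈ Set.Icc (0 : ℝ) 1) {t : ℝ} (ht : 0 ≤ t) :
    (#{S ∈ T.powersetCard k |
        ¬ ∑ y ∈ A ∩ S, c y ≤ 4 * (k : ℝ) / #T * ∑ y ∈ A \ S, c y + 2 * t} : ℝ) ≤
      #(T.powersetCard k) * exp (-(9 / 4) * t) := by
  set p : ℝ := k / #T
  have hp0 : 0 ≤ p := by positivity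
  have hp : p ≤ 1 / 12 := div_le_of_le_mul₀ (by positivity) (by norm_num) (by linarith)
  set W := ∑ y ∈ T ∩ A, c y
  have hW : 0 ≤ W := sum_nonneg fun y _ => (hc y).1
  have hcA : ∀ y, (if y ∈ A then c y else 0) ∈ Set.Icc (0 : ℝ) 1 := fun y => by
    split_ifs
    exacts [hc y, ⟨le_rfl, zero_le_one⟩]
  have hbad : {S ∈ T.powersetCard k |
        ¬ ∑ y ∈ A ∩ S, c y ≤ 4 * (k : ℝ) / #T * ∑ y ∈ A \ S, c y + 2 * t} ⊆
      {S ∈ T.powersetCard k | 3 * p * W + 3 / 2 * t < ∑ y ∈ S, if y ∈ A then c y else 0} := by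
    refine monotone_filter_right _ fun S _ hS => ?_
    rw [sum_ite_mem, inter_comm]
    rw [not_le, mul_div_assoc] at hS
    exact lt_sum_inter_of_mul_sum_sdiff_lt (fun y => (hc y).1) hp0 hp ht hS
  refine (Nat.cast_le.2 (card_le_card hbad)).trans <|
    (card_filter_powersetCard_lt_sum_le T k hcA (by norm_num : (0 : ℝ) ≤ 3 / 2) _).trans ?_
  rw [sum_ite_mem]
  refine mul_le_mul_of_nonneg_left (exp_le_exp.2 ?_) (Nat.cast_nonneg _)
  nlinarith [exp_three_halves_lt, mul_nonneg hp0 hW]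

theorem Finset.card_le_card_filter_forall_add_sum {ι κ : Type*} [Fintype κ] (s : Finset ι)
    (P : κ → ι → Prop) [DecidablePred fun a => ∀ x, P x a] [∀ x, DecidablePred (P x)] :
    #s ≤ #{a ∈ s | ∀ x, P x a} + ∑ x, #{a ∈ s | ¬ P x a} := by
  classical
  rw [← card_filter_add_card_filter_not (fun a => ∀ x, P x a)]
  refine Nat.add_le_add_left ((card_le_card fun a ha => ?_).trans card_biUnion_le) _
  obtain ⟨has, hPa⟩ := mem_filter.1 ha
  obtain ⟨x, hx⟩ := not_forall.1 hPa
  exact mem_biUnion.2 ⟨x, mem_univ x, mem_filter.2 ⟨has, hx⟩⟩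

theorem stmt_9_general (V : Type*) [Fintype V] [DecidableEq V]
    (H : SimpleGraph V) [DecidableRel H.Adj]
    (c : V → ℝ) (hc : ∀ v, c v ∈ Set.Icc (0 : ℝ) 1)
    (T : Finset V) (n' : ℕ) (hT : T.card = n')
    (k : ℕ) (hk12 : (k : ℝ) ≤ (n' : ℝ) / 12)
    (n : ℕ) (hn : Fintype.card V ≤ n) (hV : 2 ≤ Fintype.card V) :
    (1 - 1 / (n : ℝ)) * ((T.powersetCard k).card : ℝ) ≤
      (((T.powersetCard k).filter fun S => ∀ x : V,
        ∑ y ∈ H.neighborFinset x ∩ S, c y ≤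
          (4 * (k : ℝ) / (n' : ℝ)) * ∑ y ∈ H.neighborFinset x \ S, c y +
            2 * Real.log (n : ℝ)).card : ℝ) := by
  subst hT
  have hn1 : (1 : ℝ) ≤ n := by exact_mod_cast (by omega : 1 ≤ n)
  have hlog : 0 ≤ log n := log_nonneg hn1
  have hdecay : (Fintype.card V : ℝ) * exp (-(9 / 4) * log n) ≤ 1 / n := by
    have hsq : exp (-(9 / 4) * log n) ≤ ((n : ℝ) ^ 2)⁻¹ := by
      rw [← exp_log (by positivity : (0 : ℝ) < n ^ 2), ← exp_neg, exp_le_exp, log_pow]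
      push_cast
      linarith
    calc (Fintype.card V : ℝ) * exp (-(9 / 4) * log n) ≤ n * ((n : ℝ) ^ 2)⁻¹ :=
          mul_le_mul (by exact_mod_cast hn) hsq (exp_pos _).le (by positivity)
      _ = 1 / n := by field_simp
  have hunion := card_le_card_filter_forall_add_sum (T.powersetCard k) fun x S =>
    ∑ y ∈ H.neighborFinset x ∩ S, c y ≤
      4 * (k : ℝ) / #T * ∑ y ∈ H.neighborFinset x \ S, c y + 2 * log n
  have hsum := sum_le_sum fun x (_ : x ∈ univ) =>
    card_filter_powersetCard_not_le_le (H.neighborFinset x) T hk12 hc hlog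
  rw [sum_const, card_univ, nsmul_eq_mul, mul_left_comm] at hsum
  have hC := mul_le_mul_of_nonneg_left hdecay (Nat.cast_nonneg (α := ℝ) #(T.powersetCard k))
  have hunionℝ := (Nat.cast_le (α := ℝ)).2 hunion
  push_cast at hunionℝ
  linarith

/-- For a uniformly random `k`-subset `S` of `T` (`|T| = n'`, `k ≤ n'/12`), with
probability at least `1 − 1/n` every vertex `x` satisfies
`∑_{y ∈ N(x) ∩ S} c_y ≤ (4k/n')·∑_{y ∈ N(x)∖S} c_y + 2 log n`. -/
theorem stmt_9 (V : Type*) [Fintype V] [DecidableEq V]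
    (H : SimpleGraph V) [DecidableRel H.Adj]
    (c : V → ℝ) (hc : ∀ v, c v ∈ Set.Icc (0 : ℝ) 1)
    (T : Finset V) (n' : ℕ) (hT : T.card = n')
    (k : ℕ) (hk : 1 ≤ k) (hk12 : (k : ℝ) ≤ (n' : ℝ) / 12)
    (n : ℕ) (hn : Fintype.card V ≤ n) (hV : 2 ≤ Fintype.card V) :
    (1 - 1 / (n : ℝ)) * ((T.powersetCard k).card : ℝ) ≤
      (((T.powersetCard k).filter fun S => ∀ x : V,
        ∑ y ∈ H.neighborFinset x ∩ S, c y ≤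
          (4 * (k : ℝ) / (n' : ℝ)) * ∑ y ∈ H.neighborFinset x \ S, c y +
            2 * Real.log (n : ℝ)).card : ℝ) :=
  stmt_9_general V H c hc T n' hT k hk12 n hn hV
end

section
/- Let V be partitioned into three sets A, B, C and let e_A, e_B, e_C be pairwise orthogonal vectors of squared norm 1/2; define φ(u) = e_X for u ∈ X. If |A|, |B|, |C| ≤ n/2, then φ is a feasible SDP solution: ‖φ(u)‖² = 1/2, the ℓ₂² triangle inequalities ‖φ(u)−φ(v)‖² + ‖φ(v)−φ(w)‖² ≥ ‖φ(u)−φ(w)‖² hold for all triples, the spreading constraints ∑_v (1 − ‖φ(u)−φ(v)‖²) ≤ n/2 hold for all u, and the SDP cost ∑_{(u,v)∈E} ‖φ(u)−φ(v)‖² equals the number of edges of the graph crossing between different parts of the partition {A, B, C}. -/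
set_option maxHeartbeats 1600000


/-- The three-cluster assignment `φ` (constant `e_A`, `e_B`, `e_C` on the three parts
`A`, `B`, `C` of size at most `n/2`, with pairwise orthogonal vectors of squared norm
`1/2`) is a feasible SDP solution whose cost equals the number of crossing edges. -/
theorem stmt_18 (V : Type*) [Fintype V] [DecidableEq V]
    (G : SimpleGraph V) [DecidableRel G.Adj]
    (A B C : Finset V)
    (hAB : Disjoint A B) (hAC : Disjoint A C) (hBC : Disjoint B C)
    (hcover : A ∪ B ∪ C = Finset.univ)
    (hA : (A.card : ℝ) ≤ (Fintype.card V : ℝ) / 2)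
    (hB : (B.card : ℝ) ≤ (Fintype.card V : ℝ) / 2)
    (hC : (C.card : ℝ) ≤ (Fintype.card V : ℝ) / 2)
    (eA eB eC : EuclideanSpace ℝ (Fin (Fintype.card V)))
    (hnA : ‖eA‖ ^ 2 = 1 / 2) (hnB : ‖eB‖ ^ 2 = 1 / 2) (hnC : ‖eC‖ ^ 2 = 1 / 2)
    (hoAB : inner ℝ eA eB = (0 : ℝ)) (hoAC : inner ℝ eA eC = (0 : ℝ))
    (hoBC : inner ℝ eB eC = (0 : ℝ))
    (φ : V → EuclideanSpace ℝ (Fin (Fintype.card V)))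
    (hφ : ∀ u, φ u = if u ∈ A then eA else if u ∈ B then eB else eC) :
    (∀ u, ‖φ u‖ ^ 2 = 1 / 2) ∧
    (∀ u v w : V, ‖φ u - φ w‖ ^ 2 ≤ ‖φ u - φ v‖ ^ 2 + ‖φ v - φ w‖ ^ 2) ∧
    (∀ u, ∑ v, (1 - ‖φ u - φ v‖ ^ 2) ≤ (Fintype.card V : ℝ) / 2) ∧
    (∑ e ∈ G.edgeFinset,
        Sym2.lift ⟨fun u v => ‖φ u - φ v‖ ^ 2, fun u v => by simp [norm_sub_rev]⟩ e =
      ((G.edgeFinset.filter fun e => ∃ u v : V, e = s(u, v) ∧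
          ¬((u ∈ A ∧ v ∈ A) ∨ (u ∈ B ∧ v ∈ B) ∨ (u ∈ C ∧ v ∈ C))).card : ℝ)) := by
  classical
  -- derived membership facts
  have hAB' : ∀ {x}, x ∈ A → x ∉ B := fun h => Finset.disjoint_left.1 hAB h
  have hAC' : ∀ {x}, x ∈ A → x ∉ C := fun h => Finset.disjoint_left.1 hAC h
  have hBC' : ∀ {x}, x ∈ B → x ∉ C := fun h => Finset.disjoint_left.1 hBC h
  have hBA' : ∀ {x}, x ∈ B → x ∉ A := fun h h' => hAB' h' h
  have hCA' : ∀ {x}, x ∈ C → x ∉ A := fun h h' => hAC' h' h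
  have hCB' : ∀ {x}, x ∈ C → x ∉ B := fun h h' => hBC' h' h
  have hCmem : ∀ u : V, u ∉ A → u ∉ B → u ∈ C := by
    intro u h1 h2
    have := Finset.mem_univ u
    rw [← hcover] at this
    simp only [Finset.mem_union] at this
    tauto
  have norm1 : ∀ x y : EuclideanSpace ℝ (Fin (Fintype.card V)),
      ‖x‖ ^ 2 = 1 / 2 → ‖y‖ ^ 2 = 1 / 2 → inner ℝ x y = (0 : ℝ) → ‖x - y‖ ^ 2 = 1 := by
    intro x y hx hy hxy
    rw [norm_sub_sq_real, hxy]
    linarith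
  have hoBA : inner ℝ eB eA = (0 : ℝ) := by rw [real_inner_comm]; exact hoAB
  have hoCA : inner ℝ eC eA = (0 : ℝ) := by rw [real_inner_comm]; exact hoAC
  have hoCB : inner ℝ eC eB = (0 : ℝ) := by rw [real_inner_comm]; exact hoBC
  set cls : V → Fin 3 := fun u => if u ∈ A then 0 else if u ∈ B then 1 else 2 with hcls
  have φcls : ∀ u, φ u = ![eA, eB, eC] (cls u) := by
    intro u
    rw [hφ u, hcls]
    by_cases huA : u ∈ A <;> by_cases huB : u ∈ B <;> simp [huA, huB]
  have hn : ∀ i, ‖(![eA, eB, eC]) i‖ ^ 2 = 1 / 2 := by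
    intro i
    fin_cases i <;> first | simpa using hnA | simpa using hnB | simpa using hnC
  have ho : ∀ i j, i ≠ j → inner ℝ ((![eA, eB, eC]) i) ((![eA, eB, eC]) j) = (0 : ℝ) := by
    intro i j hij
    fin_cases i <;> fin_cases j <;>
      simp only [Matrix.cons_val_zero, Matrix.cons_val_one, Matrix.head_cons,
        Matrix.cons_val_two, Matrix.tail_cons] <;>
      first | exact absurd rfl hij | assumption
  have key : ∀ u v, ‖φ u - φ v‖ ^ 2 = if cls u = cls v then 0 else 1 := by
    intro u v
    rw [φcls u, φcls v]
    by_cases h : cls u = cls v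
    · rw [if_pos h, h]
      simp
    · rw [if_neg h]
      exact norm1 _ _ (hn _) (hn _) (ho _ _ h)
  have Piff : ∀ u v : V,
      ((u ∈ A ∧ v ∈ A) ∨ (u ∈ B ∧ v ∈ B) ∨ (u ∈ C ∧ v ∈ C)) ↔ cls u = cls v := by
    intro u v
    constructor
    · rintro (⟨hu, hv⟩ | ⟨hu, hv⟩ | ⟨hu, hv⟩)
      · simp [hcls, hu, hv]
      · simp [hcls, hu, hv, hBA' hu, hBA' hv]
      · simp [hcls, hu, hv, hCA' hu, hCB' hu, hCA' hv, hCB' hv]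
    · intro h
      by_cases huA : u ∈ A <;> by_cases huB : u ∈ B <;>
        by_cases hvA : v ∈ A <;> by_cases hvB : v ∈ B <;>
        simp [hcls, huA, huB, hvA, hvB] at h ⊢ <;>
        first
          | tauto
          | exact Or.inr (Or.inr ⟨hCmem u huA huB, hCmem v hvA hvB⟩)
          | exact ⟨hCmem u huA huB, hCmem v hvA hvB⟩
  refine ⟨?_, ?_, ?_, ?_⟩
  · intro u
    rw [hφ u]
    split_ifs <;> assumption
  · intro u v w
    rw [key u v, key v w, key u w]
    split_ifs with h1 h2 h3 <;> norm_num
    rename_i h2 h3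
    exact h1 (h2.trans h3)
  · intro u
    have h1 : ∀ v, 1 - ‖φ u - φ v‖ ^ 2 = if cls u = cls v then (1 : ℝ) else 0 := by
      intro v
      rw [key u v]
      split_ifs <;> ring
    calc ∑ v, (1 - ‖φ u - φ v‖ ^ 2)
        = ∑ v, if cls u = cls v then (1 : ℝ) else 0 := Finset.sum_congr rfl fun v _ => h1 v
      _ = ((Finset.univ.filter fun v => cls u = cls v).card : ℝ) := by
          rw [Finset.sum_boole]
      _ ≤ (Fintype.card V : ℝ) / 2 := by
          have hfilt : (Finset.univ.filter fun v => cls u = cls v)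
              = if u ∈ A then A else if u ∈ B then B else C := by
            ext v
            simp only [Finset.mem_filter, Finset.mem_univ, true_and, ← Piff u v]
            by_cases huA : u ∈ A <;> by_cases huB : u ∈ B <;>
              by_cases hvA : v ∈ A <;> by_cases hvB : v ∈ B <;>
              simp [huA, huB, hvA, hvB] <;>
              first
                | tauto
                | (intro h; exact (hCA' h) hvA)
                | (intro h; exact (hCB' h) hvB)
                | (rintro (⟨h1, h2⟩ | ⟨h1, h2⟩ | ⟨h1, h2⟩) <;> first | exact hAB' h1 h2 | exact hAC' h1 h2 | exact hBC' h1 h2 | exact hAB' h2 h1 | exact hAC' h2 h1 | exact hBC' h2 h1 | tauto)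
                | exact Or.inr (Or.inr ⟨hCmem u huA huB, hCmem v hvA hvB⟩)
                | exact fun _ => hCmem v hvA hvB
                | exact ⟨hCmem u huA huB, hCmem v hvA hvB⟩
          rw [hfilt]
          split_ifs <;> assumption
  · have step : ∀ e ∈ G.edgeFinset,
        Sym2.lift ⟨fun u v => ‖φ u - φ v‖ ^ 2, fun u v => by simp [norm_sub_rev]⟩ e =
        if (∃ u v : V, e = s(u, v) ∧
            ¬((u ∈ A ∧ v ∈ A) ∨ (u ∈ B ∧ v ∈ B) ∨ (u ∈ C ∧ v ∈ C))) then (1 : ℝ) else 0 := by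
      intro e _
      induction e using Sym2.inductionOn with
      | hf u v =>
        have hcond : (∃ a b : V, s(u, v) = s(a, b) ∧
            ¬((a ∈ A ∧ b ∈ A) ∨ (a ∈ B ∧ b ∈ B) ∨ (a ∈ C ∧ b ∈ C))) ↔
            ¬((u ∈ A ∧ v ∈ A) ∨ (u ∈ B ∧ v ∈ B) ∨ (u ∈ C ∧ v ∈ C)) := by
          constructor
          · rintro ⟨a, b, hab, hP⟩
            rw [Sym2.eq_iff] at hab
            rcases hab with ⟨rfl, rfl⟩ | ⟨rfl, rfl⟩
            · exact hP
            · intro h; exact hP (by tauto)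
          · intro h; exact ⟨u, v, rfl, h⟩
        simp only [Sym2.lift_mk, hcond, key u v, Piff u v]
        by_cases h : cls u = cls v <;> simp [h]
    rw [Finset.sum_congr rfl step, Finset.sum_boole]
end
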